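/- Let x, y ∈ ℝ^d with x = (x̄, |x̄|²) and y = (ȳ, |ȳ|²) on the paraboloid, x̄, ȳ ∈ [1,2]^{d-1}. Then x·y = t if and only if |ȳ/|ȳ| + 2|ȳ| x̄|² = 1 + 4t. Consequently, the dot-product set Π(E) = {x·y : x, y ∈ E} of a set E on the paraboloid with base E' ⊆ [1,2]^{d-1} has the same Hausdorff dimension as Φ(E', E'), where Φ(x̄, ȳ) = |ȳ/|ȳ| + 2|ȳ| x̄|². -/

import Mathlib

open scoped InnerProductSpace
open MeasureTheory

/-- The graph map onto the paraboloid: `x̄ ↦ (x̄, |x̄|²)`. -/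
noncomputable def liftPar (n : ℕ) (x : EuclideanSpace ℝ (Fin n)) :
    EuclideanSpace ℝ (Fin (n + 1)) := WithLp.toLp 2 (Fin.snoc x.ofLp (‖x‖ ^ 2))

/-- The map `Φ(x̄,ȳ) = |ȳ/|ȳ| + 2|ȳ|x̄|²`. -/
noncomputable def PhiMap (n : ℕ) (x y : EuclideanSpace ℝ (Fin n)) : ℝ :=
  ‖(‖y‖⁻¹ • y) + (2 * ‖y‖) • x‖ ^ 2

/-!
Expanding the square, `Φ(x̄, ȳ) = 1 + 4 x̄·ȳ + 4 |x̄|²|ȳ|² = 1 + 4 x·y` as soon as `ȳ ≠ 0`,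
which the constraint `ȳ ∈ [1,2]^{d-1}` guarantees. Hence `Φ(E', E')` is the image of `Π(E)` under
the affine bijection `t ↦ 1 + 4t`, which preserves Hausdorff dimension.
-/

theorem dimH_image_add_smul {𝕜 E : Type*} [NontriviallyNormedField 𝕜] [NormedAddCommGroup E]
    [NormedSpace 𝕜 E] (a : E) {c : 𝕜} (hc : c ≠ 0) (s : Set E) :
    dimH ((fun t => a + c • t) '' s) = dimH s := by
  have hdecomp : (fun t => a + c • t) = IsometryEquiv.addLeft a ∘
      ContinuousLinearEquiv.smulLeft (R₁ := 𝕜) (Units.mk0 c hc) := rfl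
  rw [hdecomp, Set.image_comp, IsometryEquiv.dimH_image, ContinuousLinearEquiv.dimH_image]

theorem inner_liftPar (n : ℕ) (x y : EuclideanSpace ℝ (Fin n)) :
    ⟪liftPar n x, liftPar n y⟫_ℝ = ⟪x, y⟫_ℝ + ‖x‖ ^ 2 * ‖y‖ ^ 2 := by
  simp only [liftPar, PiLp.inner_apply, RCLike.inner_apply, starRingEnd_apply, star_trivial,
    Fin.sum_univ_castSucc, Fin.snoc_castSucc, Fin.snoc_last]
  ring

theorem PhiMap_eq_one_add_four_mul_inner_liftPar (n : ℕ) (x : EuclideanSpace ℝ (Fin n))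
    {y : EuclideanSpace ℝ (Fin n)} (hy : y ≠ 0) :
    PhiMap n x y = 1 + 4 * ⟪liftPar n x, liftPar n y⟫_ℝ := by
  have hy' : 0 < ‖y‖ := norm_pos_iff.mpr hy
  rw [inner_liftPar, PhiMap, norm_add_sq_real, real_inner_smul_left, real_inner_smul_right,
    norm_smul, norm_smul, real_inner_comm y x, Real.norm_of_nonneg (by positivity),
    Real.norm_of_nonneg (by positivity)]
  field_simp
  ring

/-- For points on the paraboloid with bases in `[1,2]^{d-1}` (here `n = d-1`),
`x·y = t ↔ Φ(x̄,ȳ) = 1 + 4t`; consequently the dot-product set of a set on the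
paraboloid has the same Hausdorff dimension as `Φ(E',E')`. -/
theorem dot_iff_phi_and_dimH (n : ℕ) (hn : 2 ≤ n) :
    (∀ (x y : EuclideanSpace ℝ (Fin n)) (t : ℝ),
      (∀ j, x j ∈ Set.Icc (1 : ℝ) 2) → (∀ j, y j ∈ Set.Icc (1 : ℝ) 2) →
      (⟪liftPar n x, liftPar n y⟫_ℝ = t ↔ PhiMap n x y = 1 + 4 * t)) ∧
    ∀ E' : Set (EuclideanSpace ℝ (Fin n)),
      (∀ x ∈ E', ∀ j, x j ∈ Set.Icc (1 : ℝ) 2) →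
      dimH {t : ℝ | ∃ x ∈ E', ∃ y ∈ E', ⟪liftPar n x, liftPar n y⟫_ℝ = t} =
        dimH (Set.image2 (PhiMap n) E' E') := by
  have hne : ∀ y : EuclideanSpace ℝ (Fin n), (∀ j, y j ∈ Set.Icc (1 : ℝ) 2) → y ≠ 0 :=
    fun y hy h0 => by norm_num [h0] at hy; exact hy ⟨0, by omega⟩
  refine ⟨fun x y t _ hy => ?_, fun E' hE' => ?_⟩
  · rw [PhiMap_eq_one_add_four_mul_inner_liftPar n x (hne y hy), add_right_inj,
      mul_right_inj' four_ne_zero]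
  · have hdots : {t : ℝ | ∃ x ∈ E', ∃ y ∈ E', ⟪liftPar n x, liftPar n y⟫_ℝ = t} =
        Set.image2 (fun x y => ⟪liftPar n x, liftPar n y⟫_ℝ) E' E' := rfl
    have hphi : Set.image2 (PhiMap n) E' E' =
        (fun t : ℝ => 1 + (4 : ℝ) • t) ''
          Set.image2 (fun x y => ⟪liftPar n x, liftPar n y⟫_ℝ) E' E' := by
      rw [Set.image_image2]
      exact Set.image2_congr fun x _ y hy =>
        PhiMap_eq_one_add_four_mul_inner_liftPar n x (hne y (hE' y hy))
    rw [hdots, hphi, dimH_image_add_smul 1 four_ne_zero]
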